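/- arXiv:0810.0748 — 6 statements merged into one kernel-verified Lean document; each statement's English description precedes it below -/
import Mathlib

section
/- Let G be a group, M and N sets, h : G → M → M a right action (h 1 y = y and h X (h Y y) = h (Y * X) y for all X, Y ∈ G, y ∈ M), and y0 ∈ M a fixed reference output. Suppose an error function e : M → M → N is invariant under the diagonal action, i.e. e (h S x̂) (h S x) = e x̂ x for all S ∈ G and x̂, x ∈ M. Then for all X̂, X ∈ G, e (h X̂ y0) (h X y0) = e (h (X̂ * X⁻¹) y0) y0; that is, e factors through the canonical error h (X̂ X⁻¹) y0 via the function g(z) = e z y0. -/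
/-- Any error function `e : M → M → N` invariant under the diagonal
(right) action of `G` on `M × M` factors through the canonical error:
`e (h Xhat y0) (h X y0) = e (h (Xhat * X⁻¹) y0) y0`, i.e. `e(x̂,x) = g(h(X̂X⁻¹,y0))`
with `g z = e z y0`. -/
theorem invariant_error_factors_through_canonical_error
    {G : Type*} [Group G] {M N : Type*} (h : G → M → M)
    (h_one : ∀ y : M, h 1 y = y)
    (h_mul : ∀ (X Y : G) (y : M), h X (h Y y) = h (Y * X) y)
    (y0 : M) (e : M → M → N)
    (h_inv : ∀ (S : G) (xhat x : M), e (h S xhat) (h S x) = e xhat x)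
    (Xhat X : G) :
    e (h Xhat y0) (h X y0) = e (h (Xhat * X⁻¹) y0) y0 := by
  have := h_inv X⁻¹ (h Xhat y0) (h X y0)
  rw [h_mul, h_mul, mul_inv_cancel, h_one] at this
  exact this.symm
end

section
/- Let E be a complete real inner product space, T : E ≃ₗᵢ E a linear isometric equivalence, and f : E → E → ℝ a cost function invariant under T in both arguments, i.e. f (T a) (T b) = f a b for all a, b ∈ E. If for some y ∈ E the function x ↦ f x y is differentiable at x̂ ∈ E, then the gradient of the function x ↦ f x (T y) at the point T x̂ equals T applied to the gradient of x ↦ f x y at x̂: gradient (fun x => f x (T y)) (T x̂) = T (gradient (fun x => f x y) x̂). That is, the first-argument gradient of an invariant cost function is equivariant. -/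
open RealInnerProductSpace

/-- For a cost function `f` on a real Hilbert space `E` invariant
under a linear isometric equivalence `T` in both arguments, the gradient of the
first-argument function is equivariant:
`gradient (fun x => f x (T y)) (T xhat) = T (gradient (fun x => f x y) xhat)`. -/
theorem gradient_equivariant_of_invariant_cost
    {E : Type*} [NormedAddCommGroup E] [InnerProductSpace ℝ E] [CompleteSpace E]
    (T : E ≃ₗᵢ[ℝ] E) (f : E → E → ℝ)
    (h_inv : ∀ a b : E, f (T a) (T b) = f a b)
    (y xhat : E)
    (h_diff : DifferentiableAt ℝ (fun x => f x y) xhat) :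
    gradient (fun x => f x (T y)) (T xhat) = T (gradient (fun x => f x y) xhat) := by
  set g := fun x => f x y with hg
  have hkey : (fun x => f x (T y)) = fun x => g (T.symm x) := by
    funext x
    have := h_inv (T.symm x) y
    simp only [LinearIsometryEquiv.apply_symm_apply] at this
    simp [hg, ← this]
  have hgrad : HasGradientAt g (gradient g xhat) xhat := h_diff.hasGradientAt
  have hfd : HasFDerivAt g ((InnerProductSpace.toDual ℝ E) (gradient g xhat)) xhat :=
    hgrad.hasFDerivAt
  have hcomp : HasFDerivAt (fun x => g (T.symm x))
      (((InnerProductSpace.toDual ℝ E) (gradient g xhat)).comp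
        (T.symm : E ≃ₗᵢ[ℝ] E).toLinearIsometry.toContinuousLinearMap) (T xhat) := by
    have h2 : HasFDerivAt (fun x => T.symm x)
        (T.symm : E ≃ₗᵢ[ℝ] E).toLinearIsometry.toContinuousLinearMap (T xhat) :=
      (T.symm.toLinearIsometry.toContinuousLinearMap).hasFDerivAt
    have hfd' : HasFDerivAt g ((InnerProductSpace.toDual ℝ E) (gradient g xhat))
        (T.symm (T xhat)) := by simpa using hfd
    exact hfd'.comp (T xhat) h2
  have heq : (((InnerProductSpace.toDual ℝ E) (gradient g xhat)).comp
        (T.symm : E ≃ₗᵢ[ℝ] E).toLinearIsometry.toContinuousLinearMap)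
      = (InnerProductSpace.toDual ℝ E) (T (gradient g xhat)) := by
    ext v
    simp only [ContinuousLinearMap.comp_apply, InnerProductSpace.toDual_apply_apply]
    have : ⟪T (gradient g xhat), T (T.symm v)⟫ = ⟪gradient g xhat, T.symm v⟫ :=
      T.inner_map_map _ _
    simpa using this.symm
  have : HasGradientAt (fun x => g (T.symm x)) (T (gradient g xhat)) (T xhat) :=
    hasGradientAt_iff_hasFDerivAt.mpr (heq ▸ hcomp)
  rw [hkey]
  exact this.gradient
end

section
/- Let n be a natural number, u : ℝ → Matrix (Fin n) (Fin n) ℝ, and let X, X̂ : ℝ → Matrix (Fin n) (Fin n) ℝ satisfy the left-invariant matrix differential equations HasDerivAt X (X t * u t) t and HasDerivAt X̂ (X̂ t * u t) t for all t ∈ ℝ, with X t invertible for every t. Then the right-invariant error t ↦ X̂ t * (X t)⁻¹ is constant: for all t, X̂ t * (X t)⁻¹ = X̂ 0 * (X 0)⁻¹. -/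
open Matrix

attribute [local instance] Matrix.normedAddCommGroup Matrix.normedSpace

section Aux

variable {n : ℕ}

/-- Entrywise product rule for matrix-valued functions with the sup-sup norm. -/
lemma matrix_hasDerivAt_mul {A B : ℝ → Matrix (Fin n) (Fin n) ℝ}
    {A' B' : Matrix (Fin n) (Fin n) ℝ} {t : ℝ}
    (hA : HasDerivAt A A' t) (hB : HasDerivAt B B' t) :
    HasDerivAt (fun s => A s * B s) (A' * B t + A t * B') t := by
  have hAe : ∀ i j, HasDerivAt (fun s => A s i j) (A' i j) t := by
    intro i j
    exact hasDerivAt_pi.1 (hasDerivAt_pi.1 hA i) j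
  have hBe : ∀ i j, HasDerivAt (fun s => B s i j) (B' i j) t := by
    intro i j
    exact hasDerivAt_pi.1 (hasDerivAt_pi.1 hB i) j
  apply hasDerivAt_pi.2
  intro i
  apply hasDerivAt_pi.2
  intro j
  have : HasDerivAt (fun s => ∑ k, A s i k * B s k j)
      (∑ k, (A' i k * B t k j + A t i k * B' k j)) t :=
    HasDerivAt.fun_sum fun k _ => (hAe i k).mul (hBe k j)
  simpa [Matrix.mul_apply, Matrix.add_apply, Finset.sum_add_distrib] using this

lemma matrix_det_differentiableAt {M : ℝ → Matrix (Fin n) (Fin n) ℝ} {t : ℝ}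
    (hM : ∀ i j, DifferentiableAt ℝ (fun s => M s i j) t) :
    DifferentiableAt ℝ (fun s => (M s).det) t := by
  have : (fun s => (M s).det) = fun s =>
      ∑ σ : Equiv.Perm (Fin n), (Equiv.Perm.sign σ : ℝ) * ∏ i, M s (σ i) i := by
    funext s
    rw [Matrix.det_apply]
    simp [Units.smul_def, zsmul_eq_mul]
  rw [this]
  exact DifferentiableAt.fun_sum fun σ _ =>
    (DifferentiableAt.fun_finsetProd fun i _ => hM (σ i) i).const_mul _

end Aux

/-- Two copies `X, Xhat` of the left-invariant matrix system
`Ẋ = X u` are synchronous with respect to the right-invariant error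
`E_r = Xhat * X⁻¹`: the error is constant in time. -/
theorem right_invariant_error_constant
    {n : ℕ} (u : ℝ → Matrix (Fin n) (Fin n) ℝ)
    (X Xhat : ℝ → Matrix (Fin n) (Fin n) ℝ)
    (hX : ∀ t : ℝ, HasDerivAt X (X t * u t) t)
    (hXhat : ∀ t : ℝ, HasDerivAt Xhat (Xhat t * u t) t)
    (hinv : ∀ t : ℝ, IsUnit (X t)) :
    ∀ t : ℝ, Xhat t * (X t)⁻¹ = Xhat 0 * (X 0)⁻¹ := by
  set Y : ℝ → Matrix (Fin n) (Fin n) ℝ := fun s => (X s)⁻¹ with hYdef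
  have hXe : ∀ t i j, DifferentiableAt ℝ (fun s => X s i j) t := by
    intro t i j
    exact (hasDerivAt_pi.1 (hasDerivAt_pi.1 (hX t) i) j).differentiableAt
  have hdet_ne : ∀ t, (X t).det ≠ 0 := fun t =>
    ((Matrix.isUnit_iff_isUnit_det _).1 (hinv t)).ne_zero
  -- Y is differentiable at each t
  have hYdiff : ∀ t, DifferentiableAt ℝ Y t := by
    intro t
    have hYent : ∀ i j, DifferentiableAt ℝ (fun s => Y s i j) t := by
      intro i j
      have h1 : (fun s => Y s i j) =
          fun s => ((X s).det)⁻¹ * (X s).adjugate i j := by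
        funext s
        simp [hYdef, Matrix.inv_def, Ring.inverse_eq_inv']
      rw [h1]
      have hadj : DifferentiableAt ℝ (fun s => (X s).adjugate i j) t := by
        have h2 : (fun s => (X s).adjugate i j) =
            fun s => ((X s).updateRow j (Pi.single i 1)).det := by
          funext s; rw [Matrix.adjugate_apply]
        rw [h2]
        apply matrix_det_differentiableAt
        intro k l
        by_cases hk : k = j
        · subst hk
          simp only [Matrix.updateRow_self]
          exact differentiableAt_const _
        · simp only [Matrix.updateRow_ne hk]
          exact hXe t k l
      exact ((matrix_det_differentiableAt (hXe t)).inv (hdet_ne t)).mul hadj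
    exact differentiableAt_pi.2 fun i => differentiableAt_pi.2 fun j => hYent i j
  -- identify the derivative of Y
  have hYX : ∀ t, Y t * X t = 1 := fun t =>
    Matrix.nonsing_inv_mul _ ((Matrix.isUnit_iff_isUnit_det _).1 (hinv t))
  have hXY : ∀ t, X t * Y t = 1 := fun t =>
    Matrix.mul_nonsing_inv _ ((Matrix.isUnit_iff_isUnit_det _).1 (hinv t))
  have hY : ∀ t, HasDerivAt Y (-(u t * Y t)) t := by
    intro t
    have hY' : HasDerivAt Y (deriv Y t) t := (hYdiff t).hasDerivAt
    have hprod : HasDerivAt (fun s => Y s * X s)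
        (deriv Y t * X t + Y t * (X t * u t)) t := matrix_hasDerivAt_mul hY' (hX t)
    have hone : HasDerivAt (fun s => Y s * X s) 0 t := by
      have : (fun s => Y s * X s) = fun _ => (1 : Matrix (Fin n) (Fin n) ℝ) := by
        funext s; exact hYX s
      rw [this]; exact hasDerivAt_const _ _
    have hzero : deriv Y t * X t + Y t * (X t * u t) = 0 := hprod.unique hone
    have hYXu : Y t * (X t * u t) = u t := by
      rw [← mul_assoc, hYX, one_mul]
    rw [hYXu] at hzero
    have hY'Xt : deriv Y t * X t = -(u t) := eq_neg_of_add_eq_zero_left hzero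
    have hval : deriv Y t = -(u t * Y t) := by
      calc deriv Y t = deriv Y t * (X t * Y t) := by rw [hXY, mul_one]
        _ = (deriv Y t * X t) * Y t := by rw [mul_assoc]
        _ = -(u t) * Y t := by rw [hY'Xt]
        _ = -(u t * Y t) := by rw [neg_mul]
    rwa [hval] at hY'
  -- the error has zero derivative
  have hE : ∀ t, HasDerivAt (fun s => Xhat s * Y s) 0 t := by
    intro t
    have h := matrix_hasDerivAt_mul (hXhat t) (hY t)
    have : Xhat t * u t * Y t + Xhat t * -(u t * Y t) = 0 := by
      simp [mul_neg, mul_assoc]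
    rwa [this] at h
  intro t
  exact is_const_of_deriv_eq_zero (fun s => (hE s).differentiableAt)
    (fun s => (hE s).deriv) t 0
end

section
/- Let n be a natural number, u : ℝ → Matrix (Fin n) (Fin n) ℝ, and let X, X̂ : ℝ → Matrix (Fin n) (Fin n) ℝ satisfy HasDerivAt X (X t * u t) t and HasDerivAt X̂ (X̂ t * u t) t for all t ∈ ℝ, with X t and X̂ t invertible for every t. Fix y0 ∈ ℝⁿ. Then the outputs coincide for all time, i.e. (X̂ t)ᵀ *ᵥ y0 = (X t)ᵀ *ᵥ y0 for all t ∈ ℝ, if and only if the initial right-invariant error stabilises y0: ((X̂ 0) * (X 0)⁻¹)ᵀ *ᵥ y0 = y0. -/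
open Matrix

attribute [local instance] Matrix.normedAddCommGroup Matrix.normedSpace

namespace OutputsAux

variable {n : ℕ}

lemma hasDerivAt_matrix {M : ℝ → Matrix (Fin n) (Fin n) ℝ}
    {A : Matrix (Fin n) (Fin n) ℝ} {t : ℝ} :
    HasDerivAt M A t ↔ ∀ i j, HasDerivAt (fun s => M s i j) (A i j) t := by
  constructor
  · intro h i j
    exact hasDerivAt_pi.mp (hasDerivAt_pi.mp h i) j
  · intro h
    exact hasDerivAt_pi.mpr fun i => hasDerivAt_pi.mpr fun j => h i j

lemma hasDerivAt_matrix_mul {M N : ℝ → Matrix (Fin n) (Fin n) ℝ}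
    {A B : Matrix (Fin n) (Fin n) ℝ} {t : ℝ}
    (hM : HasDerivAt M A t) (hN : HasDerivAt N B t) :
    HasDerivAt (fun s => M s * N s) (A * N t + M t * B) t := by
  rw [hasDerivAt_matrix] at hM hN ⊢
  intro i j
  simp only [Matrix.mul_apply, Matrix.add_apply]
  rw [← Finset.sum_add_distrib]
  exact HasDerivAt.fun_sum fun k _ => (hM i k).mul (hN k j)

lemma differentiableAt_det {M : ℝ → Matrix (Fin n) (Fin n) ℝ} {t : ℝ}
    (h : ∀ i j, DifferentiableAt ℝ (fun s => M s i j) t) :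
    DifferentiableAt ℝ (fun s => (M s).det) t := by
  simp only [Matrix.det_apply']
  exact DifferentiableAt.fun_sum fun σ _ =>
    (DifferentiableAt.fun_finsetProd fun i _ => h (σ i) i).const_mul _

lemma differentiableAt_inv {X : ℝ → Matrix (Fin n) (Fin n) ℝ} {t : ℝ}
    (hX : ∀ i j, DifferentiableAt ℝ (fun s => X s i j) t)
    (hu : IsUnit (X t)) (i j : Fin n) :
    DifferentiableAt ℝ (fun s => (X s)⁻¹ i j) t := by
  have hd : DifferentiableAt ℝ (fun s => (X s).det) t := differentiableAt_det hX
  have hdet : (X t).det ≠ 0 := by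
    simpa using (Matrix.isUnit_iff_isUnit_det _).mp hu |>.ne_zero
  have hadj : DifferentiableAt ℝ (fun s => (X s).adjugate i j) t := by
    simp only [Matrix.adjugate_apply]
    apply differentiableAt_det
    intro i' j'
    by_cases h' : i' = j
    · subst h'
      simp only [Matrix.updateRow_self]
      exact differentiableAt_const _
    · simp only [Matrix.updateRow_ne h']
      exact hX i' j'
  have : (fun s => (X s)⁻¹ i j) = fun s => Ring.inverse (X s).det * (X s).adjugate i j := by
    funext s
    rw [Matrix.inv_def, Matrix.smul_apply, smul_eq_mul]
  rw [this]
  have : (fun s => Ring.inverse (X s).det * (X s).adjugate i j)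
      = fun s => ((X s).det)⁻¹ * (X s).adjugate i j := by
    funext s; rw [Ring.inverse_eq_inv]
  rw [this]
  exact (hd.inv hdet).mul hadj

end OutputsAux

open OutputsAux in
/-- For two copies `X, Xhat` of the left-invariant matrix system
`Ẋ = X u` with right-invariant output `X ↦ Xᵀ y0`, the outputs coincide for all
time iff the initial right-invariant error `Xhat 0 * (X 0)⁻¹` stabilises `y0`. -/
theorem outputs_eq_iff_initial_error_stabilises
    {n : ℕ} (u : ℝ → Matrix (Fin n) (Fin n) ℝ)
    (X Xhat : ℝ → Matrix (Fin n) (Fin n) ℝ)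
    (hX : ∀ t : ℝ, HasDerivAt X (X t * u t) t)
    (hXhat : ∀ t : ℝ, HasDerivAt Xhat (Xhat t * u t) t)
    (hXinv : ∀ t : ℝ, IsUnit (X t)) (hXhatinv : ∀ t : ℝ, IsUnit (Xhat t))
    (y0 : Fin n → ℝ) :
    (∀ t : ℝ, (Xhat t)ᵀ *ᵥ y0 = (X t)ᵀ *ᵥ y0) ↔
      (Xhat 0 * (X 0)⁻¹)ᵀ *ᵥ y0 = y0 := by
  -- The inverse trajectory and its differentiability
  set W : ℝ → Matrix (Fin n) (Fin n) ℝ := fun s => (X s)⁻¹ with hW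
  have hXentry : ∀ (t : ℝ) (i j : Fin n), DifferentiableAt ℝ (fun s => X s i j) t :=
    fun t i j => ((hasDerivAt_matrix.mp (hX t)) i j).differentiableAt
  have hWdiff : ∀ (t : ℝ) (i j : Fin n), DifferentiableAt ℝ (fun s => W s i j) t :=
    fun t i j => differentiableAt_inv (hXentry t) (hXinv t) i j
  -- W has a derivative as a matrix function
  have hWderiv : ∀ t : ℝ, HasDerivAt W
      (fun i j => deriv (fun s => W s i j) t) t := by
    intro t
    exact hasDerivAt_matrix.mpr fun i j => (hWdiff t i j).hasDerivAt
  -- Compute the derivative of W using W * X = 1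
  have hWX : ∀ t : ℝ, W t * X t = 1 := fun t =>
    Matrix.nonsing_inv_mul _ ((Matrix.isUnit_iff_isUnit_det _).mp (hXinv t))
  have hXW : ∀ t : ℝ, X t * W t = 1 := fun t =>
    Matrix.mul_nonsing_inv _ ((Matrix.isUnit_iff_isUnit_det _).mp (hXinv t))
  have hWderiv' : ∀ t : ℝ, HasDerivAt W (-(u t * W t)) t := by
    intro t
    set D : Matrix (Fin n) (Fin n) ℝ := fun i j => deriv (fun s => W s i j) t with hD
    have h1 : HasDerivAt (fun s => W s * X s) (D * X t + W t * (X t * u t)) t :=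
      hasDerivAt_matrix_mul (hWderiv t) (hX t)
    have h2 : HasDerivAt (fun s => W s * X s) 0 t := by
      have : (fun s => W s * X s) = fun _ => (1 : Matrix (Fin n) (Fin n) ℝ) :=
        funext fun s => hWX s
      rw [this]; exact hasDerivAt_const t 1
    have h3 : D * X t + W t * (X t * u t) = 0 := h1.unique h2
    have h4 : W t * (X t * u t) = u t := by rw [← mul_assoc, hWX, one_mul]
    have h5 : D * X t = -(u t) := by
      have := h3; rw [h4] at this; linear_combination (norm := noncomm_ring) this
    have h6 : D = -(u t * W t) := by
      have := congrArg (fun A => A * W t) h5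
      simpa [mul_assoc, hXW t, neg_mul] using this
    rw [← h6]; exact hWderiv t
  -- E := Xhat * W has zero derivative, hence is constant
  set E : ℝ → Matrix (Fin n) (Fin n) ℝ := fun s => Xhat s * W s with hE
  have hEderiv : ∀ t : ℝ, HasDerivAt E 0 t := by
    intro t
    have h1 : HasDerivAt E (Xhat t * u t * W t + Xhat t * -(u t * W t)) t :=
      hasDerivAt_matrix_mul (hXhat t) (hWderiv' t)
    have h2 : Xhat t * u t * W t + Xhat t * -(u t * W t) = 0 := by
      noncomm_ring
    rwa [h2] at h1
  have hEconst : ∀ t : ℝ, E t = E 0 := by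
    intro t
    apply is_const_of_fderiv_eq_zero (𝕜 := ℝ) (f := E)
    · exact fun s => (hEderiv s).differentiableAt
    · intro s
      have h0 : HasFDerivAt E (0 : ℝ →L[ℝ] Matrix (Fin n) (Fin n) ℝ) s := by
        have h1 := (hEderiv s).hasFDerivAt
        have : (ContinuousLinearMap.smulRight (1 : ℝ →L[ℝ] ℝ)
            (0 : Matrix (Fin n) (Fin n) ℝ)) = 0 := by
          ext v
          simp
        rwa [show ContinuousLinearMap.toSpanSingleton ℝ (0 : Matrix (Fin n) (Fin n) ℝ) = 0 by ext v; simp] at h1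
      exact h0.fderiv
  constructor
  · intro h
    have h0 := h 0
    have : (Xhat 0 * (X 0)⁻¹)ᵀ *ᵥ y0 = ((X 0)⁻¹)ᵀ *ᵥ ((Xhat 0)ᵀ *ᵥ y0) := by
      rw [Matrix.transpose_mul, ← Matrix.mulVec_mulVec]
    rw [this, h0, Matrix.mulVec_mulVec, ← Matrix.transpose_mul, hXW 0]
    simp
  · intro h t
    have hEt : Xhat t * (X t)⁻¹ = Xhat 0 * (X 0)⁻¹ := hEconst t
    have hXhat_eq : Xhat t = Xhat 0 * (X 0)⁻¹ * X t := by
      have := congrArg (fun A => A * X t) hEt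
      simpa [mul_assoc, Matrix.nonsing_inv_mul _ ((Matrix.isUnit_iff_isUnit_det _).mp (hXinv t)), hXW t] using this
    rw [hXhat_eq, Matrix.transpose_mul, ← Matrix.mulVec_mulVec, h]
end

section
/- Let Ω : ℝ → ℝ³, k ∈ ℝ, y0 ∈ ℝ³, and let R : ℝ → Matrix (Fin 3) (Fin 3) ℝ satisfy HasDerivAt R (R t * skew (Ω t)) t with R t * (R t)ᵀ = 1 for all t (R evolves in the orthogonal group), where skew ω is the skew-symmetric matrix with skew ω *ᵥ v = ω × v. Let ŷ : ℝ → ℝ³ satisfy the observer equation HasDerivAt ŷ (-(Ω t × ŷ t) + k • ((R t)ᵀ *ᵥ y0 - ⟪ŷ t, (R t)ᵀ *ᵥ y0⟫ • ŷ t)) t for all t. Then the canonical error e : ℝ → ℝ³, e t = R t *ᵥ ŷ t, satisfies the autonomous gradient dynamics HasDerivAt e (k • (y0 - ⟪e t, y0⟫ • e t)) t for all t. -/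
open Matrix RealInnerProductSpace

/-- The cross product on ℝ³ (realised as `EuclideanSpace ℝ (Fin 3)`, which carries the
Euclidean norm and inner product). -/
def cross (a b : EuclideanSpace ℝ (Fin 3)) : EuclideanSpace ℝ (Fin 3) := WithLp.toLp 2 (crossProduct (WithLp.ofLp a) (WithLp.ofLp b))

/-- Matrix-vector multiplication `A *ᵥ v` on ℝ³ realised as `EuclideanSpace ℝ (Fin 3)`. -/
def mv (A : Matrix (Fin 3) (Fin 3) ℝ) (v : EuclideanSpace ℝ (Fin 3)) :
    EuclideanSpace ℝ (Fin 3) := WithLp.toLp 2 (A *ᵥ WithLp.ofLp v)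

/-- `skew ω` is the skew-symmetric matrix with `skew ω *ᵥ v = ω × v`. -/
def skew (ω : EuclideanSpace ℝ (Fin 3)) : Matrix (Fin 3) (Fin 3) ℝ :=
  !![0, -ω 2, ω 1; ω 2, 0, -ω 0; -ω 1, ω 0, 0]

attribute [local instance] Matrix.normedAddCommGroup Matrix.normedSpace

/-- Explicit coercion from `EuclideanSpace ℝ (Fin 3)` to the plain pi type. -/
def toPi (x : EuclideanSpace ℝ (Fin 3)) : Fin 3 → ℝ := x

lemma toPi_add (x y : EuclideanSpace ℝ (Fin 3)) : toPi (x + y) = toPi x + toPi y := rfl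
lemma toPi_neg (x : EuclideanSpace ℝ (Fin 3)) : toPi (-x) = -toPi x := rfl
lemma toPi_sub (x y : EuclideanSpace ℝ (Fin 3)) : toPi (x - y) = toPi x - toPi y := rfl
lemma toPi_smul (c : ℝ) (x : EuclideanSpace ℝ (Fin 3)) : toPi (c • x) = c • toPi x := rfl

lemma euc_iff {f : ℝ → EuclideanSpace ℝ (Fin 3)} {v : EuclideanSpace ℝ (Fin 3)} {t : ℝ} :
    HasDerivAt f v t ↔ ∀ i, HasDerivAt (fun s => f s i) (v i) t := by
  constructor
  · intro h i
    exact (EuclideanSpace.proj i).hasFDerivAt.comp_hasDerivAt t h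
  · intro h
    have h2 : HasDerivAt (fun s => (fun i => f s i : Fin 3 → ℝ)) (fun i => v i) t :=
      hasDerivAt_pi.2 h
    exact ((EuclideanSpace.equiv (Fin 3) ℝ).symm.toContinuousLinearMap).hasFDerivAt.comp_hasDerivAt t h2

lemma mat_entry {M : ℝ → Matrix (Fin 3) (Fin 3) ℝ} {M' : Matrix (Fin 3) (Fin 3) ℝ} {t : ℝ}
    (h : HasDerivAt M M' t) (i j : Fin 3) :
    HasDerivAt (fun s => M s i j) (M' i j) t :=
  hasDerivAt_pi.1 (hasDerivAt_pi.1 h i) j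

lemma skew_mulVec (ω u : EuclideanSpace ℝ (Fin 3)) :
    skew ω *ᵥ toPi u = toPi (cross ω u) := by
  funext i
  fin_cases i <;>
    simp [skew, toPi, cross, Matrix.mulVec, dotProduct, Fin.sum_univ_three,
      crossProduct] <;> ring

lemma inner_shift (A : Matrix (Fin 3) (Fin 3) ℝ) (u v : EuclideanSpace ℝ (Fin 3)) :
    ⟪u, mv Aᵀ v⟫ = ⟪mv A u, v⟫ := by
  have h : toPi u ⬝ᵥ (Aᵀ *ᵥ toPi v) = (A *ᵥ toPi u) ⬝ᵥ toPi v := by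
    rw [Matrix.dotProduct_mulVec, Matrix.vecMul_transpose]
  simpa [PiLp.inner_apply, RCLike.inner_apply, mv, toPi, dotProduct, mul_comm] using h

lemma mv_toPi (A : Matrix (Fin 3) (Fin 3) ℝ) (v : EuclideanSpace ℝ (Fin 3)) :
    toPi (mv A v) = A *ᵥ toPi v := rfl


/-- For the attitude kinematics `Ṙ = R (Ω)×` on the orthogonal group
with output `y = Rᵀ y0`, and the gradient observer
`ŷ' = -Ω × ŷ + k (y - ⟪ŷ, y⟫ ŷ)` on the sphere, the canonical error `e = R ŷ`
satisfies the autonomous gradient dynamics `ė = k (y0 - ⟪e, y0⟫ e)`. -/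
theorem canonical_error_autonomous_gradient_dynamics
    (Ω : ℝ → EuclideanSpace ℝ (Fin 3)) (k : ℝ) (y0 : EuclideanSpace ℝ (Fin 3))
    (R : ℝ → Matrix (Fin 3) (Fin 3) ℝ)
    (hR : ∀ t : ℝ, HasDerivAt R (R t * skew (Ω t)) t)
    (hRorth : ∀ t : ℝ, R t * (R t)ᵀ = 1)
    (yhat : ℝ → EuclideanSpace ℝ (Fin 3))
    (hobs : ∀ t : ℝ,
      HasDerivAt yhat
        (-(cross (Ω t) (yhat t)) +
          k • (mv (R t)ᵀ y0 - ⟪yhat t, mv (R t)ᵀ y0⟫ • yhat t)) t)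
    (e : ℝ → EuclideanSpace ℝ (Fin 3)) (he : ∀ t : ℝ, e t = mv (R t) (yhat t)) :
    ∀ t : ℝ, HasDerivAt e (k • (y0 - ⟪e t, y0⟫ • e t)) t := by
  intro t
  set U' : EuclideanSpace ℝ (Fin 3) :=
    -(cross (Ω t) (yhat t)) + k • (mv (R t)ᵀ y0 - ⟪yhat t, mv (R t)ᵀ y0⟫ • yhat t) with hU'
  have key : (R t * skew (Ω t)) *ᵥ toPi (yhat t) + (R t) *ᵥ toPi U'
      = toPi (k • (y0 - ⟪e t, y0⟫ • e t)) := by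
    rw [hU', toPi_add, toPi_neg, toPi_smul, toPi_sub, toPi_smul, mv_toPi,
      Matrix.mulVec_add, Matrix.mulVec_neg, Matrix.mulVec_smul, Matrix.mulVec_sub,
      Matrix.mulVec_smul, Matrix.mulVec_mulVec, ← Matrix.mulVec_mulVec (toPi (yhat t)) (R t) (skew (Ω t)),
      skew_mulVec, hRorth t, Matrix.one_mulVec, inner_shift, he t,
      toPi_smul, toPi_sub, toPi_smul, mv_toPi]
    abel
  have hder : ∀ i, HasDerivAt (fun s => e s i)
      (((R t * skew (Ω t)) *ᵥ toPi (yhat t) + (R t) *ᵥ toPi U') i) t := by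
    intro i
    have hE : (fun s => e s i) = fun s => ∑ j, R s i j * yhat s j := by
      funext s; rw [he s]; rfl
    rw [hE]
    have hsum : HasDerivAt (fun s => ∑ j, R s i j * yhat s j)
        (∑ j, ((R t * skew (Ω t)) i j * yhat t j + R t i j * U' j)) t := by
      apply HasDerivAt.fun_sum
      intro j _
      exact (mat_entry (hR t) i j).mul (euc_iff.1 (hobs t) j)
    convert hsum using 1
    simp [Matrix.mulVec, dotProduct, Finset.sum_add_distrib, toPi]
  exact euc_iff.2 (fun i => by
    have := hder i
    rwa [key] at this)
end

section
/- Let k > 0 and let y0 ∈ EuclideanSpace ℝ (Fin 3) with ‖y0‖ = 1. Suppose e : ℝ → EuclideanSpace ℝ (Fin 3) satisfies HasDerivAt e (k • (y0 - ⟪e t, y0⟫ • e t)) t for all t ∈ ℝ, with ‖e 0‖ = 1 and e 0 ≠ -y0. Then e t converges to y0 as t → ∞, i.e. Tendsto e atTop (𝓝 y0). -/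
open RealInnerProductSpace Filter

/-- Uniqueness-type lemma: a scalar function satisfying a linear ODE
`f' = a·f` with continuous coefficient and `f 0 = 0` vanishes identically. -/
lemma linear_ode_zero (a f : ℝ → ℝ) (hac : Continuous a)
    (hf : ∀ t, HasDerivAt f (a t * f t) t) (h0 : f 0 = 0) : ∀ t, f t = 0 := by
  set A : ℝ → ℝ := fun t => ∫ s in (0:ℝ)..t, a s with hA
  have hAderiv : ∀ t, HasDerivAt A (a t) t := fun t =>
    (hac.integral_hasStrictDerivAt 0 t).hasDerivAt
  set g : ℝ → ℝ := fun t => f t * Real.exp (-(A t)) with hg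
  have hgderiv : ∀ t, HasDerivAt g 0 t := by
    intro t
    have h1 : HasDerivAt (fun t => Real.exp (-(A t))) (Real.exp (-(A t)) * (-(a t))) t :=
      ((hAderiv t).neg).exp
    have := (hf t).mul h1
    convert this using 1
    case e'_4 => rfl
    case e'_5 => rfl
    case e'_8 => rfl
    ring
  have hconst : ∀ t, g t = g 0 := by
    intro t
    have : ∀ x, deriv g x = 0 := fun x => (hgderiv x).deriv
    have hdiff : Differentiable ℝ g := fun x => (hgderiv x).differentiableAt
    have := is_const_of_deriv_eq_zero hdiff this t 0
    exact this
  intro t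
  have h := hconst t
  simp only [hg, h0, zero_mul] at h
  have hexp : Real.exp (-(A t)) ≠ 0 := Real.exp_ne_zero _
  exact (mul_eq_zero.mp h).resolve_right hexp

/-- Almost-global asymptotic stability of the canonical error dynamics
`ė = k (y0 - ⟪e, y0⟫ e)` on the unit sphere: for `k > 0`, `‖y0‖ = 1`, every solution
starting on the unit sphere away from the antipodal point `-y0` converges to `y0`. -/
theorem error_dynamics_almost_global_convergence
    (k : ℝ) (hk : 0 < k) (y0 : EuclideanSpace ℝ (Fin 3)) (hy0 : ‖y0‖ = 1)
    (e : ℝ → EuclideanSpace ℝ (Fin 3))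
    (hde : ∀ t : ℝ, HasDerivAt e (k • (y0 - ⟪e t, y0⟫ • e t)) t)
    (h0 : ‖e 0‖ = 1) (hne : e 0 ≠ -y0) :
    Tendsto e atTop (nhds y0) := by
  have hy0sq : ⟪y0, y0⟫ = 1 := by
    rw [real_inner_self_eq_norm_sq, hy0]; norm_num
  set c : ℝ → ℝ := fun t => ⟪e t, y0⟫ with hc
  -- derivative of c
  have hcd : ∀ t, HasDerivAt c (k * (1 - c t ^ 2)) t := by
    intro t
    have := (hde t).inner ℝ (hasDerivAt_const t y0)
    simp only [inner_zero_right, add_zero, zero_add] at this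
    convert this using 1
    case e'_4 => rfl
    case e'_5 => rfl
    rw [real_inner_smul_left, inner_sub_left, real_inner_smul_left, hy0sq]
    ring
  have hccont : Continuous c := by
    rw [continuous_iff_continuousAt]
    exact fun t => (hcd t).continuousAt
  -- norm is preserved: ⟪e t, e t⟫ = 1
  have hnorm : ∀ t, ⟪e t, e t⟫ = 1 := by
    set m : ℝ → ℝ := fun t => ⟪e t, e t⟫ - 1 with hm
    have hmd : ∀ t, HasDerivAt m ((-(2 * k * c t)) * m t) t := by
      intro t
      have := ((hde t).inner ℝ (hde t)).sub_const 1
      convert this using 1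
      case e'_4 => rfl
      case e'_5 => rfl
      simp only [real_inner_smul_left, real_inner_smul_right, inner_sub_left, inner_sub_right,
        real_inner_comm (e t) y0]
      show -(2 * k * ⟪e t, y0⟫) * (⟪e t, e t⟫ - 1) = _
      ring
    have hm0 : m 0 = 0 := by
      show ⟪e 0, e 0⟫ - 1 = 0
      rw [real_inner_self_eq_norm_sq, h0]; norm_num
    have := linear_ode_zero (fun t => -(2 * k * c t)) m
      (continuous_const.mul hccont).neg hmd hm0
    intro t
    exact sub_eq_zero.mp (this t)
  -- bounds on c 0
  have hc0le : c 0 ≤ 1 := by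
    calc c 0 ≤ ‖e 0‖ * ‖y0‖ := real_inner_le_norm _ _
    _ = 1 := by rw [h0, hy0]; ring
  have hc0gt : -1 < c 0 := by
    rcases lt_or_eq_of_le (neg_le_of_abs_le (by
      calc |c 0| ≤ ‖e 0‖ * ‖y0‖ := abs_real_inner_le_norm _ _
      _ = 1 := by rw [h0, hy0]; ring)) with h | h
    · exact h
    · exfalso
      apply hne
      have h1 : ⟪e 0, -y0⟫ = 1 := by
        rw [inner_neg_right]
        have hc0 : ⟪e 0, y0⟫ = c 0 := rfl
        rw [hc0, ← h]; ring
      have := (inner_eq_one_iff_of_norm_eq_one h0 (by rw [norm_neg, hy0])).mp h1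
      exact this
  -- explicit solution
  set p : ℝ := 1 + c 0 with hp
  set q : ℝ := 1 - c 0 with hq
  have hppos : 0 < p := by simp only [hp]; linarith
  have hqnn : 0 ≤ q := by simp only [hq]; linarith
  set φ : ℝ → ℝ := fun t => (p * Real.exp (2 * k * t) - q) / (p * Real.exp (2 * k * t) + q)
    with hφ
  have hDpos : ∀ t, 0 < p * Real.exp (2 * k * t) + q := fun t => by
    have := Real.exp_pos (2 * k * t)
    nlinarith
  have hφd : ∀ t, HasDerivAt φ (k * (1 - φ t ^ 2)) t := by
    intro t
    have hE : HasDerivAt (fun t => Real.exp (2 * k * t)) (Real.exp (2 * k * t) * (2 * k)) t := by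
      have : HasDerivAt (fun t : ℝ => 2 * k * t) (2 * k) t := by
        simpa using (hasDerivAt_id t).const_mul (2 * k)
      exact this.exp
    have hnum : HasDerivAt (fun t => p * Real.exp (2 * k * t) - q)
        (p * (Real.exp (2 * k * t) * (2 * k))) t := (hE.const_mul p).sub_const q
    have hden : HasDerivAt (fun t => p * Real.exp (2 * k * t) + q)
        (p * (Real.exp (2 * k * t) * (2 * k))) t := (hE.const_mul p).add_const q
    have := hnum.div hden (ne_of_gt (hDpos t))
    convert this using 1
    case e'_4 => rfl
    case e'_5 => rfl
    case e'_8 => rfl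
    have hD := hDpos t
    simp only [hφ]
    field_simp
    ring
  have hφcont : Continuous φ := by
    rw [continuous_iff_continuousAt]
    exact fun t => (hφd t).continuousAt
  -- uniqueness: c = φ
  have hcφ : ∀ t, c t = φ t := by
    set ψ : ℝ → ℝ := fun t => c t - φ t with hψ
    have hψd : ∀ t, HasDerivAt ψ ((-(k * (c t + φ t))) * ψ t) t := by
      intro t
      have := (hcd t).sub (hφd t)
      convert this using 1
      case e'_4 => rfl
      case e'_5 => rfl
      case e'_8 => rfl
      simp only [hψ]
      ring
    have hψ0 : ψ 0 = 0 := by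
      show c 0 - (p * Real.exp (2 * k * 0) - q) / (p * Real.exp (2 * k * 0) + q) = 0
      rw [mul_zero, Real.exp_zero, mul_one]
      have h2 : p + q = 2 := by simp only [hp, hq]; ring
      have h3 : p - q = 2 * c 0 := by simp only [hp, hq]; ring
      rw [h2, h3]
      ring
    have := linear_ode_zero (fun t => -(k * (c t + φ t))) ψ
      (continuous_const.mul (hccont.add hφcont)).neg hψd hψ0
    intro t
    exact sub_eq_zero.mp (this t)
  -- φ tends to 1
  have hφtend : Tendsto φ atTop (nhds 1) := by
    have heq : ∀ t, φ t = (p - q * Real.exp (-(2 * k * t))) / (p + q * Real.exp (-(2 * k * t))) := by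
      intro t
      have hE := Real.exp_pos (2 * k * t)
      simp only [hφ]
      rw [Real.exp_neg]
      field_simp
    have hexp : Tendsto (fun t => Real.exp (-(2 * k * t))) atTop (nhds 0) := by
      apply Real.tendsto_exp_atBot.comp
      apply tendsto_neg_atBot_iff.mpr
      exact Tendsto.const_mul_atTop (by linarith) tendsto_id
    have h1 : Tendsto (fun t => p - q * Real.exp (-(2 * k * t))) atTop (nhds p) := by
      simpa using tendsto_const_nhds.sub (hexp.const_mul q)
    have h2 : Tendsto (fun t => p + q * Real.exp (-(2 * k * t))) atTop (nhds p) := by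
      simpa using tendsto_const_nhds.add (hexp.const_mul q)
    have := h1.div h2 (ne_of_gt hppos)
    rw [div_self (ne_of_gt hppos)] at this
    exact Tendsto.congr (fun t => (heq t).symm) this
  have hctend : Tendsto c atTop (nhds 1) := by
    have : c = φ := funext hcφ
    rw [this]; exact hφtend
  -- conclude
  rw [tendsto_iff_norm_sub_tendsto_zero]
  have hkey : ∀ t, ‖e t - y0‖ = Real.sqrt (2 - 2 * c t) := by
    intro t
    have hsq : ‖e t - y0‖ ^ 2 = 2 - 2 * c t := by
      rw [← real_inner_self_eq_norm_sq, inner_sub_sub_self, hnorm t, hy0sq,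
        real_inner_comm (e t) y0]
      show 1 - ⟪e t, y0⟫ - ⟪e t, y0⟫ + 1 = 2 - 2 * ⟪e t, y0⟫
      ring
    rw [← Real.sqrt_sq (norm_nonneg (e t - y0)), hsq]
  simp only [hkey]
  have h2c : Tendsto (fun t => 2 - 2 * c t) atTop (nhds 0) := by
    have h' : Tendsto (fun t => (2:ℝ) - 2 * c t) atTop (nhds (2 - 2 * 1)) :=
      tendsto_const_nhds.sub (hctend.const_mul 2)
    simpa using h'
  have hs := h2c.sqrt
  simpa using hs
end
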